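/- arXiv:1108.1033 — 2 statements merged into one kernel-verified Lean document; each statement's English description precedes it below -/
import Mathlib

section
/- Least favorable configuration: for X ∼ N_d(c, Σ) with c ∈ K, the probability P(X ∈ A) is minimized over c ∈ K at c = 0, where A = {x : inf_{y∈K} ‖x−y‖_{Σ^{-1}} < d₀}. Formally, for every c ∈ K, P(X ∈ A | mean c) ≥ P(X ∈ A | mean 0). -/
open Matrix MeasureTheory

/-! Translating by `c ∈ K` maps the `d₀`-neighbourhood `A` of the cone `K` into itself, because a
convex cone is closed under addition: if `x` is within `d₀` of `y ∈ K`, then `c + x` is within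
`d₀` of `c + y ∈ K`. Hence `A ⊆ (c + ·)⁻¹' A`, and monotonicity of the measure finishes. -/

theorem Convex.add_mem_of_smul_mem {𝕜 E : Type*} [Field 𝕜] [LinearOrder 𝕜] [IsStrictOrderedRing 𝕜]
    [AddCommGroup E] [Module 𝕜 E] {K : Set E} (hconv : Convex 𝕜 K)
    (hcone : ∀ x ∈ K, ∀ r : 𝕜, 0 ≤ r → r • x ∈ K) {x y : E} (hx : x ∈ K) (hy : y ∈ K) :
    x + y ∈ K := by
  have hmid : (1 / 2 : 𝕜) • x + (1 / 2 : 𝕜) • y ∈ K :=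
    hconv hx hy (by positivity) (by positivity) (add_halves 1)
  simpa [smul_add, smul_smul] using hcone _ hmid 2 zero_le_two

theorem mapsTo_add_setOf_exists_sub_lt {E : Type*} [AddCommGroup E] (N : E → ℝ) {K : Set E}
    {c : E} (hK : ∀ y ∈ K, c + y ∈ K) (r : ℝ) :
    Set.MapsTo (c + ·) {x | ∃ y ∈ K, N (x - y) < r} {x | ∃ y ∈ K, N (x - y) < r} := by
  rintro x ⟨y, hy, hxy⟩
  exact ⟨c + y, hK y hy, by rwa [add_sub_add_left_eq_sub]⟩

theorem MeasureTheory.Measure.apply_le_map_apply_of_mapsTo {α : Type*} [MeasurableSpace α]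
    {μ : Measure α} {f : α → α} (hf : AEMeasurable f μ) {s : Set α} (hs : Set.MapsTo f s s) :
    μ s ≤ μ.map f s :=
  (measure_mono hs).trans (le_map_apply hf s)

theorem least_favorable_configuration_general
    (d : ℕ) (S : Matrix (Fin d) (Fin d) ℝ)
    (μ₀ : Measure (Fin d → ℝ))
    (K : Set (Fin d → ℝ)) (hKconv : Convex ℝ K)
    (hKcone : ∀ x ∈ K, ∀ r : ℝ, 0 ≤ r → r • x ∈ K)
    (c : Fin d → ℝ) (hc : c ∈ K) (d₀ : ℝ) :
    let nS : (Fin d → ℝ) → ℝ := fun v => Real.sqrt (v ⬝ᵥ S.mulVec v)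
    let A : Set (Fin d → ℝ) := {x | ∃ y ∈ K, nS (x - y) < d₀}
    μ₀ A ≤ (μ₀.map (fun z => c + z)) A := by
  intro nS A
  exact Measure.apply_le_map_apply_of_mapsTo (measurable_const_add c).aemeasurable
    (mapsTo_add_setOf_exists_sub_lt nS (fun y hy => hKconv.add_mem_of_smul_mem hKcone hc hy) d₀)

/-- Least favorable configuration: for a Gaussian vector `X ∼ N_d(c, Σ)` (realized as
`c + Z` where `Z` has the centered law `μ₀`), with `c ∈ K` and `A` the open `d₀`-neighborhood
of the closed convex cone `K` in the `‖·‖_{Σ⁻¹}` metric (given by a positive definite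
matrix `S = Σ⁻¹`), we have `P(X ∈ A | mean c) ≥ P(X ∈ A | mean 0)`. -/
theorem least_favorable_configuration
    (d : ℕ) (S : Matrix (Fin d) (Fin d) ℝ) (hS : S.PosDef)
    (μ₀ : Measure (Fin d → ℝ)) [IsProbabilityMeasure μ₀]
    (K : Set (Fin d → ℝ)) (hKclosed : IsClosed K) (hKconv : Convex ℝ K)
    (hKcone : ∀ x ∈ K, ∀ r : ℝ, 0 ≤ r → r • x ∈ K)
    (c : Fin d → ℝ) (hc : c ∈ K) (d₀ : ℝ) (hd₀ : 0 < d₀) :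
    let nS : (Fin d → ℝ) → ℝ := fun v => Real.sqrt (v ⬝ᵥ S.mulVec v)
    let A : Set (Fin d → ℝ) := {x | ∃ y ∈ K, nS (x - y) < d₀}
    μ₀ A ≤ (μ₀.map (fun z => c + z)) A :=
  least_favorable_configuration_general d S μ₀ K hKconv hKcone c hc d₀
end

section
/- Confidence-bound inequality: for any nonnegative finite measure μ on T and vectors ĉ, c ∈ ℝ^(n+1), with μ[ψ] = ∫_T ψ(t) dμ(t), one has ∫_T (ĉ − c)ᵀψ(t) dμ(t) ≤ ‖μ[ψ]‖_Σ · ‖Π_Σ(Σ^{-1}(ĉ − c) | K*)‖_Σ, where Π_Σ(·|K*) is the projection onto the moment cone K* in the ‖·‖_Σ metric. -/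
/-!
Let `p` be the `Σ`-projection of `z = Σ⁻¹(ĉ - c)` onto the closed convex cone `K*`. The
variational inequality `⟪z - p, q - p⟫_Σ ≤ 0` for `q ∈ K*`, applied to `q = x + p`, gives
`⟪z, x⟫_Σ ≤ ⟪p, x⟫_Σ ≤ ‖x‖_Σ ‖p‖_Σ` for every `x ∈ K*` (Cauchy–Schwarz). Take `x = μ[ψ]`: it lies
in `K*` because it is a nonnegative multiple of the `μ`-average of `ψ`, and `ψ` takes values
`μ`-a.e. in the closed convex set `K*`. Finally `∫ (ĉ - c)ᵀψ dμ = (ĉ - c)ᵀμ[ψ] = ⟪z, μ[ψ]⟫_Σ`.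
-/

open Matrix MeasureTheory

namespace PointedCone

variable {R E ι : Type*} [Semiring R] [PartialOrder R] [IsOrderedRing R] [AddCommMonoid E]
  [Module R E]

theorem mem_hull_image_iff_exists_fin_sum {f : ι → E} {s : Set ι} {x : E} :
    x ∈ hull R (f '' s) ↔ ∃ (k : ℕ) (ρ : Fin k → R) (τ : Fin k → ι),
      (∀ i, 0 ≤ ρ i) ∧ (∀ i, τ i ∈ s) ∧ x = ∑ i, ρ i • f (τ i) := by
  rw [Submodule.mem_span_set']
  constructor
  · rintro ⟨k, ρ, g, rfl⟩
    choose τ hτ hfτ using fun i => (g i).2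
    exact ⟨k, fun i => ρ i, τ, fun i => (ρ i).2, hτ, by simp [hfτ]⟩
  · rintro ⟨k, ρ, τ, hρ, hτ, rfl⟩
    exact ⟨k, fun i => ⟨ρ i, hρ i⟩, fun i => ⟨f (τ i), τ i, hτ i, rfl⟩, rfl⟩

end PointedCone

theorem ContinuousOn.integrable_of_measure_compl_eq_zero {X E : Type*} [TopologicalSpace X]
    [T2Space X] [MeasurableSpace X] [OpensMeasurableSpace X] [NormedAddCommGroup E] {μ : Measure X}
    [IsFiniteMeasure μ] {T : Set X} (hT : IsCompact T) (hμT : μ Tᶜ = 0) {f : X → E}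
    (hf : ContinuousOn f T) : Integrable f μ := by
  rw [← Measure.restrict_eq_self_of_ae_mem (ae_iff.2 hμT)]
  exact hf.integrableOn_compact hT

theorem integral_dotProduct {α ι : Type*} [MeasurableSpace α] [Fintype ι] {μ : Measure α}
    (v : ι → ℝ) {f : α → ι → ℝ} (hf : Integrable f μ) :
    ∫ x, v ⬝ᵥ f x ∂μ = v ⬝ᵥ ∫ x, f x ∂μ := by
  simp only [dotProduct]
  rw [integral_finsetSum _ fun i _ => (hf.eval i).const_mul _]
  simp only [integral_const_mul, eval_integral hf.eval]

theorem PointedCone.integral_mem {α E : Type*} [MeasurableSpace α] [NormedAddCommGroup E]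
    [NormedSpace ℝ E] [CompleteSpace E] {μ : Measure α} [IsFiniteMeasure μ]
    (K : PointedCone ℝ E) (hK : IsClosed (K : Set E)) {f : α → E} (hf : ∀ᵐ x ∂μ, f x ∈ K)
    (hfi : Integrable f μ) : ∫ x, f x ∂μ ∈ K := by
  rcases eq_zero_or_neZero μ with rfl | _
  · simp
  rw [← measure_smul_average]
  exact PointedCone.smul_mem K measureReal_nonneg (K.convex.average_mem hK hf hfi)

theorem PointedCone.real_inner_le_norm_mul_norm_of_isMinOn {F : Type*}
    [NormedAddCommGroup F] [InnerProductSpace ℝ F] (K : PointedCone ℝ F) {z p x : F}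
    (hp : p ∈ K) (hmin : IsMinOn (fun q => ‖z - q‖) K p) (hx : x ∈ K) :
    inner ℝ x z ≤ ‖x‖ * ‖p‖ := by
  have hvar : ∀ q ∈ K, inner ℝ (z - p) (q - p) ≤ 0 :=
    (norm_eq_iInf_iff_real_inner_le_zero K.convex hp).1 <|
      le_antisymm (le_ciInf fun q => isMinOn_iff.1 hmin q q.2)
        (ciInf_le (f := fun q : (K : Set F) => ‖z - q‖)
          ⟨0, Set.forall_mem_range.2 fun q => norm_nonneg _⟩ ⟨p, hp⟩)
  have hxp := hvar (x + p) (K.add_mem hx hp)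
  rw [add_sub_cancel_right, inner_sub_left, real_inner_comm x z, real_inner_comm x p] at hxp
  calc inner ℝ x z ≤ inner ℝ x p := by linarith
    _ ≤ ‖x‖ * ‖p‖ := real_inner_le_norm x p

theorem Matrix.PosDef.dotProduct_mulVec_le_of_isMinOn {n : Type*} [Fintype n]
    {M : Matrix n n ℝ} (hM : M.PosDef) (K : PointedCone ℝ (n → ℝ)) {z p x : n → ℝ}
    (hp : p ∈ K)
    (hmin : IsMinOn (fun q => √((z - q) ⬝ᵥ M *ᵥ (z - q))) K p)
    (hx : x ∈ K) : x ⬝ᵥ M *ᵥ z ≤ √(x ⬝ᵥ M *ᵥ x) * √(p ⬝ᵥ M *ᵥ p) := by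
  simp only [dotProduct_comm _ (M *ᵥ _)] at hmin ⊢
  -- `n → ℝ` already carries the sup norm, so the `M`-inner product, `⟪x, y⟫ = M *ᵥ y ⬝ᵥ x`,
  -- has to be supplied explicitly.
  exact @PointedCone.real_inner_le_norm_mul_norm_of_isMinOn _
    (M.toNormedAddCommGroup hM) (M.toInnerProductSpace hM.posSemidef) K z p x hp hmin hx

/-- Confidence-bound inequality: for a nonnegative finite measure `μ` supported on a
compact set `T`, with `μ[ψ] = ∫ ψ(t) dμ(t)` (componentwise) and `p` the projection of
`z = Σ⁻¹(ĉ − c)` onto the moment cone `K*` in the `‖·‖_Σ` metric,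
`∫ (ĉ − c)ᵀψ(t) dμ(t) ≤ ‖μ[ψ]‖_Σ · ‖p‖_Σ`. -/
theorem confidence_bound_inequality
    (n : ℕ) (T : Set ℝ) (hT : IsCompact T)
    (Sig : Matrix (Fin (n + 1)) (Fin (n + 1)) ℝ) (hSig : Sig.PosDef)
    (μ : Measure ℝ) [IsFiniteMeasure μ] (hμT : μ Tᶜ = 0)
    (chat c : Fin (n + 1) → ℝ) :
    let ψ : ℝ → (Fin (n + 1) → ℝ) := fun t i => t ^ (i : ℕ)
    let Kstar : Set (Fin (n + 1) → ℝ) :=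
      closure {x | ∃ (k : ℕ) (ρ : Fin k → ℝ) (τ : Fin k → ℝ),
        (∀ i, 0 ≤ ρ i) ∧ (∀ i, τ i ∈ T) ∧ x = ∑ i : Fin k, ρ i • ψ (τ i)}
    let nSig : (Fin (n + 1) → ℝ) → ℝ := fun v => Real.sqrt (v ⬝ᵥ Sig.mulVec v)
    let μψ : Fin (n + 1) → ℝ := fun i => ∫ t, t ^ (i : ℕ) ∂μ
    let z : Fin (n + 1) → ℝ := Sig⁻¹.mulVec (chat - c)
    ∀ p : Fin (n + 1) → ℝ, p ∈ Kstar → (∀ q ∈ Kstar, nSig (z - p) ≤ nSig (z - q)) →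
      (∫ t, (chat - c) ⬝ᵥ ψ t ∂μ) ≤ nSig μψ * nSig p := by
  intro ψ Kstar nSig μψ z p hp hproj
  set K := (PointedCone.hull ℝ (ψ '' T)).closure
  have hK : (K : Set (Fin (n + 1) → ℝ)) = Kstar := by
    rw [PointedCone.coe_closure]
    congr 1
    ext x
    exact PointedCone.mem_hull_image_iff_exists_fin_sum
  rw [← hK] at hp hproj
  have hψ : Integrable ψ μ :=
    (continuous_pi fun i => continuous_pow _ : Continuous ψ).continuousOn
      |>.integrable_of_measure_compl_eq_zero hT hμT
  have hμψ : μψ = ∫ t, ψ t ∂μ := funext fun i => (eval_integral hψ.eval i).symm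
  have hμψK : μψ ∈ K := hμψ ▸ K.integral_mem isClosed_closure
    ((ae_iff.2 hμT).mono fun t ht => subset_closure (PointedCone.subset_hull ⟨t, ht, rfl⟩)) hψ
  have hz : Sig *ᵥ z = chat - c := by
    simp [z, mulVec_mulVec, mul_nonsing_inv _ ((isUnit_iff_isUnit_det Sig).1 hSig.isUnit)]
  calc ∫ t, (chat - c) ⬝ᵥ ψ t ∂μ = μψ ⬝ᵥ Sig *ᵥ z := by
        rw [integral_dotProduct _ hψ, ← hμψ, hz, dotProduct_comm]
    _ ≤ nSig μψ * nSig p := hSig.dotProduct_mulVec_le_of_isMinOn K hp (isMinOn_iff.2 hproj) hμψK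
end
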